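/- Let 1 ≤ p < ∞ and n ∈ ℕ. The embedding constant C̃(p,q,n) := [ q/(q-p) + 2^{nq/p} + 2^{(n+1)q} Γ(q+1) e^{b+q+1} ]^{1/q}, with b = 1/(2^{n/p'+1} · e) where 1/p + 1/p' = 1, satisfies C̃(p,q,n) = O(q) as q → ∞; that is, there exist a constant C_n > 0 depending only on the dimension n and a threshold q_0 > p such that C̃(p,q,n) ≤ C_n · q for all q ≥ q_0. -/
import Mathlib


open MeasureTheory ENNReal

noncomputable section

/-- The axis-parallel cube in `ℝⁿ` with corner `a` and side length `r`. -/
def cube (n : ℕ) (a : Fin n → ℝ) (r : ℝ) : Set (Fin n → ℝ) :=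
  Set.univ.pi fun i => Set.Icc (a i) (a i + r)

/-- The weak `L^p` quasi-norm. -/
def wlpNorm {α : Type*} [MeasurableSpace α] (μ : Measure α) (p : ℝ) (f : α → ℝ) : ℝ≥0∞ :=
  ⨆ (t : ℝ) (_ : 0 < t), ENNReal.ofReal t * μ {x | t < |f x|} ^ (1 / p)

/-- The BMO seminorm, via averages over axis-parallel cubes. -/
def bmoNorm {n : ℕ} (f : (Fin n → ℝ) → ℝ) : ℝ≥0∞ :=
  ⨆ (a : Fin n → ℝ) (r : ℝ) (_ : 0 < r),
    ENNReal.ofReal (⨍ x in cube n a r, |f x - ⨍ y in cube n a r, f y|)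

/-- The Morrey norm. -/
def morreyNorm {n : ℕ} (p κ : ℝ) (f : (Fin n → ℝ) → ℝ) : ℝ≥0∞ :=
  ⨆ (a : Fin n → ℝ) (r : ℝ) (_ : 0 < r),
    ((volume (cube n a r) ^ κ)⁻¹ *
      ∫⁻ x in cube n a r, ENNReal.ofReal (|f x| ^ p)) ^ (1 / p)

/-- The weak Morrey norm. -/
def wMorreyNorm {n : ℕ} (p κ : ℝ) (f : (Fin n → ℝ) → ℝ) : ℝ≥0∞ :=
  ⨆ (a : Fin n → ℝ) (r : ℝ) (_ : 0 < r) (t : ℝ) (_ : 0 < t),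
    (volume (cube n a r) ^ (κ / p))⁻¹ * ENNReal.ofReal t *
      (volume {y ∈ cube n a r | t < |f y|}) ^ (1 / p)


/-- The embedding constant `C̃(p,q,n)` of Theorem 2.10:
`C̃(p,q,n) = [q/(q-p) + 2^{nq/p} + 2^{(n+1)q} Γ(q+1) e^{b+q+1}]^{1/q}` with
`b = 1/(2^{n/p′+1} e)`, where `n/p′ = n(1 - 1/p)`. -/
def Ctilde (p q : ℝ) (n : ℕ) : ℝ :=
  (q / (q - p) + 2 ^ ((n : ℝ) * q / p) +
      2 ^ (((n : ℝ) + 1) * q) * Real.Gamma (q + 1) *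
        Real.exp (1 / (2 ^ ((n : ℝ) * (1 - 1 / p) + 1) * Real.exp 1) + q + 1)) ^ (1 / q)

theorem gamma_bd (q : ℝ) (hq : 4 ≤ q) : Real.Gamma (q+1) ≤ (2*q) ^ (q+1) := by
  set m := ⌈q⌉₊ with hm
  have hmq : q ≤ m := Nat.le_ceil q
  have hm1 : (m:ℝ) < q + 1 := Nat.ceil_lt_add_one (by linarith)
  have h1 : Real.Gamma (q+1) ≤ Real.Gamma (m+1) :=
    Real.Gamma_strictMonoOn_Ici.monotoneOn (by simp [Set.mem_Ici]; linarith)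
      (by simp [Set.mem_Ici]; linarith) (by linarith)
  have h2 : Real.Gamma ((m:ℝ)+1) = (Nat.factorial m : ℝ) := Real.Gamma_nat_eq_factorial m
  have h3 : (Nat.factorial m : ℝ) ≤ (m:ℝ)^m := by exact_mod_cast Nat.factorial_le_pow m
  have h4 : (m:ℝ)^m ≤ (2*q)^(m:ℕ) := pow_le_pow_left₀ (by positivity) (by linarith) m
  have h5 : ((2*q):ℝ)^(m:ℕ) = (2*q) ^ ((m:ℕ):ℝ) := (Real.rpow_natCast _ m).symm
  have h6 : (2*q) ^ ((m:ℕ):ℝ) ≤ (2*q)^(q+1) :=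
    Real.rpow_le_rpow_of_exponent_le (by linarith) (by linarith)
  rw [h5] at h4
  linarith [h1, h2, h3, h4.trans h6]

theorem third_bd (n : ℕ) (q : ℝ) (hq : 4 ≤ q) :
    (2:ℝ)^(((n:ℝ)+1)*q) * Real.Gamma (q+1) * Real.exp (q+2) ≤
      ((2:ℝ)^(n+2) * Real.exp 4 * q)^q := by
  have hq0 : (0:ℝ) < q := by linarith
  have h2q : (0:ℝ) < 2*q := by linarith
  have hGpos : 0 < Real.Gamma (q+1) := Real.Gamma_pos_of_pos (by linarith)
  have step1 : (2:ℝ)^(((n:ℝ)+1)*q) * Real.Gamma (q+1) * Real.exp (q+2) ≤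
      (2:ℝ)^(((n:ℝ)+1)*q) * ((2*q)^(q+1)) * Real.exp (q+2) := by
    have := gamma_bd q hq
    have h2p : (0:ℝ) < (2:ℝ)^(((n:ℝ)+1)*q) := Real.rpow_pos_of_pos (by norm_num) _
    nlinarith [Real.exp_pos (q+2), mul_le_mul_of_nonneg_left this h2p.le]
  refine step1.trans ?_
  have e1 : (2:ℝ)^(((n:ℝ)+1)*q) = ((2:ℝ)^(n+1))^q := by
    rw [Real.rpow_mul (by norm_num)]
    norm_num [← Real.rpow_natCast 2 (n+1)]
  have e2 : ((2*q):ℝ)^(q+1) = (2*q)^q * (2*q) := by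
    rw [Real.rpow_add h2q, Real.rpow_one]
  have e3 : Real.exp (q+2) = Real.exp 1 ^ q * Real.exp 2 := by
    rw [Real.exp_one_rpow, ← Real.exp_add]
  have e4 : ((2:ℝ)^(n+2) * Real.exp 4 * q) = ((2:ℝ)^(n+1)) * (2*q) * Real.exp 1 * Real.exp 3 := by
    have h : Real.exp 4 = Real.exp 1 * Real.exp 3 := by rw [← Real.exp_add]; norm_num
    rw [h]; ring
  have e5 : ((2:ℝ)^(n+2) * Real.exp 4 * q)^q
      = ((2:ℝ)^(n+1))^q * (2*q)^q * Real.exp 1 ^ q * Real.exp 3 ^ q := by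
    rw [e4, Real.mul_rpow (by positivity) (Real.exp_pos 3).le,
      Real.mul_rpow (by positivity) (Real.exp_pos 1).le,
      Real.mul_rpow (by positivity) h2q.le]
  rw [e1, e2, e3, e5]
  have key : 2*q * Real.exp 2 ≤ Real.exp 3 ^ q := by
    have e6 : Real.exp 3 ^ q = Real.exp (3*q) := (Real.exp_mul 3 q).symm
    rw [e6]
    have h1 : 3*q - 2 + 1 ≤ Real.exp (3*q-2) := Real.add_one_le_exp _
    have h2 : Real.exp (3*q) = Real.exp (3*q-2) * Real.exp 2 := by
      rw [← Real.exp_add]; ring_nf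
    rw [h2]
    have : 2*q ≤ Real.exp (3*q-2) := by linarith
    nlinarith [Real.exp_pos 2]
  have P : (0:ℝ) ≤ ((2:ℝ)^(n+1))^q * (2*q)^q * Real.exp 1 ^ q := by positivity
  calc ((2:ℝ)^(n+1))^q * ((2*q)^q * (2*q)) * (Real.exp 1 ^ q * Real.exp 2)
      = (((2:ℝ)^(n+1))^q * (2*q)^q * Real.exp 1 ^ q) * (2*q*Real.exp 2) := by ring
    _ ≤ (((2:ℝ)^(n+1))^q * (2*q)^q * Real.exp 1 ^ q) * Real.exp 3 ^ q :=
        mul_le_mul_of_nonneg_left key P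
    _ = ((2:ℝ)^(n+1))^q * (2*q)^q * Real.exp 1 ^ q * Real.exp 3 ^ q := by ring

/-- The embedding constant `C̃(p,q,n)` satisfies `C̃(p,q,n) = O(q)` as
`q → ∞`: there are `Cₙ > 0` depending only on `n` and a threshold `q₀ > p` with
`C̃(p,q,n) ≤ Cₙ · q` for all `q ≥ q₀`. -/
theorem Ctilde_linear_growth (n : ℕ) :
    ∃ Cn : ℝ, 0 < Cn ∧ ∀ p : ℝ, 1 ≤ p →
      ∃ q₀ : ℝ, p < q₀ ∧ ∀ q : ℝ, q₀ ≤ q → Ctilde p q n ≤ Cn * q := by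
  refine ⟨3 * ((2:ℝ)^(n+2) * Real.exp 4), by positivity, fun p hp => ⟨2*p+2, by linarith,
    fun q hq => ?_⟩⟩
  set M : ℝ := (2:ℝ)^(n+2) * Real.exp 4 with hM
  have hE : (5:ℝ) ≤ Real.exp 4 := by have := Real.add_one_le_exp (4:ℝ); linarith
  have hpow : (4:ℝ) ≤ (2:ℝ)^(n+2) := by
    calc (4:ℝ) = 2^2 := by norm_num
      _ ≤ 2^(n+2) := pow_le_pow_right₀ one_le_two (by omega)
  have hM1 : (1:ℝ) ≤ M := by nlinarith
  have hq4 : 4 ≤ q := by linarith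
  have hq0 : (0:ℝ) < q := by linarith
  have hp0 : (0:ℝ) < p := by linarith
  have hMq : (2:ℝ) ≤ M * q := by nlinarith
  -- Term 1
  have ht1 : q / (q - p) ≤ 2 := by
    rw [div_le_iff₀ (by linarith)]; linarith
  have h2le : (2:ℝ) ≤ (M*q)^q := by
    have h := Real.rpow_le_rpow_of_exponent_le (by linarith : (1:ℝ) ≤ M*q)
      (by linarith : (1:ℝ) ≤ q)
    rw [Real.rpow_one] at h; linarith
  -- Term 2
  have ht2 : (2:ℝ) ^ ((n:ℝ) * q / p) ≤ (M*q)^q := by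
    have ha : (2:ℝ) ^ ((n:ℝ) * q / p) ≤ (2:ℝ) ^ ((n:ℝ) * q) :=
      Real.rpow_le_rpow_of_exponent_le one_le_two (div_le_self (by positivity) hp)
    have hb : (2:ℝ) ^ ((n:ℝ) * q) = ((2:ℝ)^(n:ℝ))^q := Real.rpow_mul (by norm_num) _ _
    have hc : (2:ℝ)^(n:ℝ) ≤ M * q := by
      rw [Real.rpow_natCast]
      have : (2:ℝ)^n ≤ 2^(n+2) := pow_le_pow_right₀ one_le_two (by omega)
      nlinarith [pow_pos (two_pos (α := ℝ)) (n+2)]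
    calc (2:ℝ) ^ ((n:ℝ) * q / p) ≤ ((2:ℝ)^(n:ℝ))^q := by rw [← hb]; exact ha
      _ ≤ (M*q)^q := Real.rpow_le_rpow (by positivity) hc hq0.le
  -- Term 3
  have hGpos : 0 < Real.Gamma (q+1) := Real.Gamma_pos_of_pos (by linarith)
  have ht3 : (2:ℝ) ^ (((n:ℝ) + 1) * q) * Real.Gamma (q + 1) *
      Real.exp (1 / (2 ^ ((n:ℝ) * (1 - 1/p) + 1) * Real.exp 1) + q + 1) ≤ (M*q)^q := by
    set x : ℝ := (n:ℝ) * (1 - 1/p) + 1 with hx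
    have hx0 : 0 ≤ x := by
      have h1p : 1/p ≤ 1 := by rw [div_le_one hp0]; linarith
      have h2 : (0:ℝ) ≤ (n:ℝ) * (1 - 1/p) := mul_nonneg (Nat.cast_nonneg n) (by linarith)
      rw [hx]; linarith
    have hden : (1:ℝ) ≤ (2:ℝ)^x * Real.exp 1 := by
      have h1 : (1:ℝ) ≤ (2:ℝ)^x := by
        have := Real.rpow_le_rpow_of_exponent_le one_le_two hx0
        rwa [Real.rpow_zero] at this
      nlinarith [Real.one_le_exp (le_refl (0:ℝ) |>.trans (by norm_num : (0:ℝ) ≤ 1))]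
    have hble : 1 / ((2:ℝ)^x * Real.exp 1) ≤ 1 := by
      rw [div_le_one (by positivity)]; exact hden
    have hexp : Real.exp (1 / ((2:ℝ)^x * Real.exp 1) + q + 1) ≤ Real.exp (q + 2) :=
      Real.exp_le_exp.mpr (by linarith)
    have step : (2:ℝ) ^ (((n:ℝ) + 1) * q) * Real.Gamma (q + 1) *
        Real.exp (1 / ((2:ℝ)^x * Real.exp 1) + q + 1) ≤
        (2:ℝ) ^ (((n:ℝ) + 1) * q) * Real.Gamma (q + 1) * Real.exp (q + 2) := by
      have hpp : (0:ℝ) < (2:ℝ) ^ (((n:ℝ) + 1) * q) * Real.Gamma (q + 1) := by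
        have := Real.rpow_pos_of_pos (show (0:ℝ) < 2 by norm_num) (((n:ℝ) + 1) * q)
        positivity
      exact mul_le_mul_of_nonneg_left hexp hpp.le
    exact step.trans (third_bd n q hq4)
  -- assemble
  have hA0 : (0:ℝ) ≤ q / (q - p) := div_nonneg hq0.le (by linarith)
  have hsum : q / (q - p) + 2 ^ ((n:ℝ) * q / p) +
      2 ^ (((n:ℝ) + 1) * q) * Real.Gamma (q + 1) *
        Real.exp (1 / (2 ^ ((n:ℝ) * (1 - 1/p) + 1) * Real.exp 1) + q + 1) ≤
      (3 * M * q) ^ q := by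
    have h3 : (3:ℝ) ≤ (3:ℝ)^q := by
      have := Real.rpow_le_rpow_of_exponent_le (by norm_num : (1:ℝ) ≤ 3) (by linarith : (1:ℝ) ≤ q)
      rwa [Real.rpow_one] at this
    have hmul : ((3:ℝ) * M * q) ^ q = 3^q * (M*q)^q := by
      rw [mul_assoc, Real.mul_rpow (by norm_num) (by positivity)]
    rw [hmul]
    nlinarith [Real.rpow_nonneg (show (0:ℝ) ≤ M*q by nlinarith) q]
  have hAnn : (0:ℝ) ≤ q / (q - p) + 2 ^ ((n:ℝ) * q / p) +
      2 ^ (((n:ℝ) + 1) * q) * Real.Gamma (q + 1) *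
        Real.exp (1 / (2 ^ ((n:ℝ) * (1 - 1/p) + 1) * Real.exp 1) + q + 1) := by
    have h1 : (0:ℝ) ≤ 2 ^ ((n:ℝ) * q / p) := by positivity
    have h2 : (0:ℝ) ≤ 2 ^ (((n:ℝ) + 1) * q) * Real.Gamma (q + 1) *
        Real.exp (1 / (2 ^ ((n:ℝ) * (1 - 1/p) + 1) * Real.exp 1) + q + 1) := by
      have := Real.rpow_pos_of_pos (show (0:ℝ) < 2 by norm_num) (((n:ℝ) + 1) * q)
      positivity
    linarith
  unfold Ctilde
  calc (q / (q - p) + 2 ^ ((n:ℝ) * q / p) +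
      2 ^ (((n:ℝ) + 1) * q) * Real.Gamma (q + 1) *
        Real.exp (1 / (2 ^ ((n:ℝ) * (1 - 1/p) + 1) * Real.exp 1) + q + 1)) ^ (1/q)
      ≤ ((3 * M * q) ^ q) ^ (1/q) := Real.rpow_le_rpow hAnn hsum (by positivity)
    _ = 3 * M * q := by
        rw [← Real.rpow_mul (by positivity), mul_one_div_cancel hq0.ne', Real.rpow_one]


end
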